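/- Let J, D, B_λ be as above with tr(J) < 0, det(J) > 0, 0 < d < 1, and assume λ > 0 is such that tr(B_μ) > 0 and tr(B_μ)² - 4 det(B_μ) > 0 for all 0 ≤ μ ≤ λ. Then 0 < μ⁻_0 < μ⁻_λ < μ⁺_λ < μ⁺_0, where μ±_λ = (tr(B_λ) ± sqrt(tr(B_λ)² - 4 det(B_λ)))/2. -/

import Mathlib

open Matrix

/-- The diffusion matrix D = diag(1, d). -/
noncomputable def Dmat (d : ℝ) : Matrix (Fin 2) (Fin 2) ℝ := !![1, 0; 0, d]

/-- B_λ = D⁻¹ (J - λ I). -/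
noncomputable def Bmat (J : Matrix (Fin 2) (Fin 2) ℝ) (d lam : ℝ) :
    Matrix (Fin 2) (Fin 2) ℝ := (Dmat d)⁻¹ * (J - lam • 1)

/-- The larger eigenvalue μ⁺_λ of B_λ. -/
noncomputable def muP (J : Matrix (Fin 2) (Fin 2) ℝ) (d : ℝ) (lam : ℝ) : ℝ :=
  ((Bmat J d lam).trace +
    Real.sqrt ((Bmat J d lam).trace ^ 2 - 4 * (Bmat J d lam).det)) / 2

/-- The smaller eigenvalue μ⁻_λ of B_λ. -/
noncomputable def muM (J : Matrix (Fin 2) (Fin 2) ℝ) (d : ℝ) (lam : ℝ) : ℝ :=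
  ((Bmat J d lam).trace -
    Real.sqrt ((Bmat J d lam).trace ^ 2 - 4 * (Bmat J d lam).det)) / 2

/-! The smaller root of `x² - t x + q` is `q` divided by the larger one (Vieta), so it increases
with `q` as soon as the larger root decreases; and the larger root decreases when `t` decreases
and `q` increases, since then the discriminant decreases. Along `λ ↦ B_λ` the trace decreases
and, because `tr J < 0`, the determinant `(λ² - λ tr J + det J) / d` increases on `λ ≥ 0`. -/

lemma quadratic_roots_mul {t q : ℝ} (h : 0 ≤ t ^ 2 - 4 * q) :
    (t - √(t ^ 2 - 4 * q)) / 2 * ((t + √(t ^ 2 - 4 * q)) / 2) = q := by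
  linear_combination (-1 / 4 : ℝ) * Real.sq_sqrt h

lemma quadratic_smaller_root_lt_larger {t q : ℝ} (h : 0 < t ^ 2 - 4 * q) :
    (t - √(t ^ 2 - 4 * q)) / 2 < (t + √(t ^ 2 - 4 * q)) / 2 := by
  linarith [Real.sqrt_pos.mpr h]

lemma quadratic_larger_root_pos {t q : ℝ} (ht : 0 < t) : 0 < (t + √(t ^ 2 - 4 * q)) / 2 := by
  positivity

lemma quadratic_smaller_root_eq_div {t q : ℝ} (ht : 0 < t) (h : 0 ≤ t ^ 2 - 4 * q) :
    (t - √(t ^ 2 - 4 * q)) / 2 = q / ((t + √(t ^ 2 - 4 * q)) / 2) := by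
  rw [eq_div_iff (quadratic_larger_root_pos ht).ne', quadratic_roots_mul h]

lemma quadratic_smaller_root_pos {t q : ℝ} (ht : 0 < t) (hq : 0 < q) (h : 0 ≤ t ^ 2 - 4 * q) :
    0 < (t - √(t ^ 2 - 4 * q)) / 2 := by
  rw [quadratic_smaller_root_eq_div ht h]
  exact div_pos hq (quadratic_larger_root_pos ht)

lemma quadratic_larger_root_lt {t₀ q₀ t₁ q₁ : ℝ} (ht₁ : 0 ≤ t₁) (ht : t₁ < t₀) (hq : q₀ ≤ q₁) :
    (t₁ + √(t₁ ^ 2 - 4 * q₁)) / 2 < (t₀ + √(t₀ ^ 2 - 4 * q₀)) / 2 := by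
  have hdisc : t₁ ^ 2 - 4 * q₁ ≤ t₀ ^ 2 - 4 * q₀ := by nlinarith
  linarith [Real.sqrt_le_sqrt hdisc]

lemma quadratic_smaller_root_lt {t₀ q₀ t₁ q₁ : ℝ} (ht₁ : 0 < t₁) (ht : t₁ < t₀) (hq₀ : 0 < q₀)
    (hq : q₀ < q₁) (h₀ : 0 ≤ t₀ ^ 2 - 4 * q₀) (h₁ : 0 ≤ t₁ ^ 2 - 4 * q₁) :
    (t₀ - √(t₀ ^ 2 - 4 * q₀)) / 2 < (t₁ - √(t₁ ^ 2 - 4 * q₁)) / 2 := by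
  rw [quadratic_smaller_root_eq_div (ht₁.trans ht) h₀, quadratic_smaller_root_eq_div ht₁ h₁]
  exact div_lt_div₀ hq (quadratic_larger_root_lt ht₁.le ht hq.le).le (hq₀.trans hq).le
    (quadratic_larger_root_pos ht₁)

section Bmat

variable (J : Matrix (Fin 2) (Fin 2) ℝ) {d : ℝ}

lemma Dmat_inv (hd : d ≠ 0) : (Dmat d)⁻¹ = !![1, 0; 0, d⁻¹] := by
  apply inv_eq_right_inv
  simp [Dmat, one_fin_two, hd]

lemma trace_Bmat (hd : d ≠ 0) (μ : ℝ) :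
    (Bmat J d μ).trace = J 0 0 + J 1 1 / d - μ * (1 + 1 / d) := by
  simp [Bmat, Dmat_inv hd, trace_fin_two, vecMul, dotProduct, Fin.sum_univ_two]
  ring

lemma det_Bmat (μ : ℝ) : (Bmat J d μ).det = (μ ^ 2 - μ * J.trace + J.det) / d := by
  simp [Bmat, Dmat, det_fin_two, trace_fin_two, one_fin_two]
  ring

lemma trace_Bmat_strictAnti (hd : 0 < d) : StrictAnti fun μ ↦ (Bmat J d μ).trace := by
  intro μ₁ μ₂ h
  simp only [trace_Bmat J hd.ne']
  have : 0 < 1 + 1 / d := by positivity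
  nlinarith

lemma det_Bmat_strictMonoOn (hd : 0 < d) (htr : J.trace ≤ 0) :
    StrictMonoOn (fun μ ↦ (Bmat J d μ).det) (Set.Ici 0) := by
  intro μ₁ h₁ μ₂ _ h
  simp only [det_Bmat]
  gcongr ?_ / d
  nlinarith [Set.mem_Ici.mp h₁]

end Bmat

theorem stmt7_general (J : Matrix (Fin 2) (Fin 2) ℝ) (d lam : ℝ)
    (hd : 0 < d)
    (htr : J.trace < 0) (hdet : 0 < J.det) (hlam : 0 < lam)
    (hcond : ∀ μ : ℝ, 0 ≤ μ → μ ≤ lam →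
      0 < (Bmat J d μ).trace ∧
      0 < (Bmat J d μ).trace ^ 2 - 4 * (Bmat J d μ).det) :
    0 < muM J d 0 ∧ muM J d 0 < muM J d lam ∧ muM J d lam < muP J d lam ∧
      muP J d lam < muP J d 0 := by
  obtain ⟨ht₀, hdisc₀⟩ := hcond 0 le_rfl hlam.le
  obtain ⟨htlam, hdisclam⟩ := hcond lam hlam.le le_rfl
  have htrace : (Bmat J d lam).trace < (Bmat J d 0).trace := trace_Bmat_strictAnti J hd hlam
  have hdet_lt : (Bmat J d 0).det < (Bmat J d lam).det :=
    det_Bmat_strictMonoOn J hd htr.le Set.self_mem_Ici hlam.le hlam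
  have hdet₀ : 0 < (Bmat J d 0).det := by rw [det_Bmat]; simpa using div_pos hdet hd
  exact ⟨quadratic_smaller_root_pos ht₀ hdet₀ hdisc₀.le,
    quadratic_smaller_root_lt htlam htrace hdet₀ hdet_lt hdisc₀.le hdisclam.le,
    quadratic_smaller_root_lt_larger hdisclam,
    quadratic_larger_root_lt htlam.le htrace hdet_lt.le⟩

theorem stmt7 (J : Matrix (Fin 2) (Fin 2) ℝ) (d lam : ℝ)
    (hd : 0 < d) (hd1 : d < 1)
    (htr : J.trace < 0) (hdet : 0 < J.det) (hlam : 0 < lam)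
    (hcond : ∀ μ : ℝ, 0 ≤ μ → μ ≤ lam →
      0 < (Bmat J d μ).trace ∧
      0 < (Bmat J d μ).trace ^ 2 - 4 * (Bmat J d μ).det) :
    0 < muM J d 0 ∧ muM J d 0 < muM J d lam ∧ muM J d lam < muP J d lam ∧
      muP J d lam < muP J d 0 :=
  stmt7_general J d lam hd htr hdet hlam hcond
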